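/- arXiv:2509.26629 — 5 statements merged into one kernel-verified Lean document; each statement's English description precedes it below -/
import Mathlib

section
/- Let $\bar{\varrho}_1, \bar{\varrho}_2 > 0$ and let $h_1, h_2 : \mathbb{R} \to \mathbb{R}$ be differentiable on $[0,\infty)$ with $h_1(0) > 0$, $h_2(0) > 0$, and satisfying for all $t \ge 0$: $h_1'(t) \ge -\bar{\varrho}_1 (1+t)\, h_1(t) + h_2(t)$ and $h_2'(t) \ge -\bar{\varrho}_2 (1+t)\, h_2(t)$. Then for all $t \ge 0$, $h_1(t) \ge h_1(0)\,\exp\big(-\bar{\varrho}_1\big(\tfrac{t^2}{2} + t\big)\big) > 0$. -/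
/-! Multiplying by the integrating factor `exp (ϱ (t²/2 + t))` turns each differential
inequality `f' ≥ -ϱ (1 + t) f` into monotonicity of the product. Applied to `h₂` this keeps
`h₂` positive, so the first inequality reduces to `h₁' ≥ -ϱ̄₁ (1 + t) h₁`, and the same
argument applies to `h₁`. -/

open Real Set

theorem le_of_hasDerivAt_nonneg_of_le {f f' : ℝ → ℝ} {a : ℝ}
    (hf : ∀ t, a ≤ t → HasDerivAt f (f' t) t) (hf' : ∀ t, a ≤ t → 0 ≤ f' t) :
    ∀ t, a ≤ t → f a ≤ f t := by
  have hmono : MonotoneOn f (Ici a) := by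
    refine monotoneOn_of_hasDerivWithinAt_nonneg (f' := f') (convex_Ici a)
      (fun t ht => (hf t ht).continuousAt.continuousWithinAt) (fun t ht => ?_) (fun t ht => ?_)
    · rw [interior_Ici] at ht ⊢
      exact (hf t (le_of_lt ht)).hasDerivWithinAt
    · rw [interior_Ici] at ht
      exact hf' t (le_of_lt ht)
  exact fun t ht => hmono self_mem_Ici ht ht

theorem mul_exp_sub_le_of_neg_mul_le_deriv {f f' K k : ℝ → ℝ} {a : ℝ}
    (hf : ∀ t, a ≤ t → HasDerivAt f (f' t) t) (hK : ∀ t, a ≤ t → HasDerivAt K (k t) t)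
    (hineq : ∀ t, a ≤ t → -k t * f t ≤ f' t) :
    ∀ t, a ≤ t → f a * exp (K a - K t) ≤ f t := by
  have hmono : ∀ t, a ≤ t → f a * exp (K a) ≤ f t * exp (K t) :=
    le_of_hasDerivAt_nonneg_of_le (f := fun s => f s * exp (K s))
      (fun t ht => (hf t ht).mul (hK t ht).exp)
      (fun t ht => by
        have := mul_le_mul_of_nonneg_right (hineq t ht) (exp_pos (K t)).le
        linarith)
  intro t ht
  rw [exp_sub, ← mul_div_assoc, div_le_iff₀ (exp_pos _)]
  exact hmono t ht

theorem hasDerivAt_const_mul_sq_div_two_add (c t : ℝ) :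
    HasDerivAt (fun s => c * (s ^ 2 / 2 + s)) (c * (1 + t)) t := by
  refine ((((hasDerivAt_pow 2 t).div_const 2).add (hasDerivAt_id' t)).const_mul c).congr_deriv ?_
  push_cast
  ring

theorem mul_exp_le_of_neg_mul_one_add_le_deriv {f f' : ℝ → ℝ} {ϱ : ℝ}
    (hf : ∀ t, 0 ≤ t → HasDerivAt f (f' t) t)
    (hineq : ∀ t, 0 ≤ t → -ϱ * (1 + t) * f t ≤ f' t) :
    ∀ t, 0 ≤ t → f 0 * exp (-ϱ * (t ^ 2 / 2 + t)) ≤ f t := by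
  intro t ht
  convert mul_exp_sub_le_of_neg_mul_le_deriv hf
    (fun s _ => hasDerivAt_const_mul_sq_div_two_add ϱ s)
    (fun s hs => by simpa only [neg_mul] using hineq s hs) t ht using 3
  ring

theorem double_integrator_hyperexponential_general (ϱ1 ϱ2 : ℝ)
    (h1 h2 h1' h2' : ℝ → ℝ)
    (hd1 : ∀ t, 0 ≤ t → HasDerivAt h1 (h1' t) t)
    (hd2 : ∀ t, 0 ≤ t → HasDerivAt h2 (h2' t) t)
    (hi1 : 0 < h1 0) (hi2 : 0 < h2 0)
    (hineq1 : ∀ t, 0 ≤ t → h1' t ≥ -ϱ1 * (1 + t) * h1 t + h2 t)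
    (hineq2 : ∀ t, 0 ≤ t → h2' t ≥ -ϱ2 * (1 + t) * h2 t) :
    ∀ t, 0 ≤ t →
      h1 t ≥ h1 0 * Real.exp (-ϱ1 * (t ^ 2 / 2 + t)) ∧
      0 < h1 0 * Real.exp (-ϱ1 * (t ^ 2 / 2 + t)) := by
  have h2_pos : ∀ t, 0 ≤ t → 0 < h2 t := fun t ht =>
    lt_of_lt_of_le (by positivity) (mul_exp_le_of_neg_mul_one_add_le_deriv hd2 hineq2 t ht)
  intro t ht
  refine ⟨mul_exp_le_of_neg_mul_one_add_le_deriv hd1 (fun s hs => ?_) t ht, by positivity⟩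
  linarith [hineq1 s hs, h2_pos s hs]

/-- Hyperexponential estimate for the double integrator with gain `Υ(t) = 1 + t` and
`t₀ = 0`: if `h₁(0) > 0`, `h₂(0) > 0`, `h₁' ≥ -ϱ̄₁(1+t)h₁ + h₂` and
`h₂' ≥ -ϱ̄₂(1+t)h₂` on `[0, ∞)`, then `h₁(t) ≥ h₁(0) exp(-ϱ̄₁(t²/2 + t)) > 0`. -/
theorem double_integrator_hyperexponential (ϱ1 ϱ2 : ℝ) (hϱ1 : 0 < ϱ1) (hϱ2 : 0 < ϱ2)
    (h1 h2 h1' h2' : ℝ → ℝ)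
    (hd1 : ∀ t, 0 ≤ t → HasDerivAt h1 (h1' t) t)
    (hd2 : ∀ t, 0 ≤ t → HasDerivAt h2 (h2' t) t)
    (hi1 : 0 < h1 0) (hi2 : 0 < h2 0)
    (hineq1 : ∀ t, 0 ≤ t → h1' t ≥ -ϱ1 * (1 + t) * h1 t + h2 t)
    (hineq2 : ∀ t, 0 ≤ t → h2' t ≥ -ϱ2 * (1 + t) * h2 t) :
    ∀ t, 0 ≤ t →
      h1 t ≥ h1 0 * Real.exp (-ϱ1 * (t ^ 2 / 2 + t)) ∧
      0 < h1 0 * Real.exp (-ϱ1 * (t ^ 2 / 2 + t)) :=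
  double_integrator_hyperexponential_general ϱ1 ϱ2 h1 h2 h1' h2' hd1 hd2 hi1 hi2 hineq1 hineq2
end

section
/- Let $t_0 \in \mathbb{R}$, let $\Upsilon : \mathbb{R} \to \mathbb{R}$ be continuously differentiable with $\Upsilon(t) > 0$ for all $t \ge t_0$, and let $\bar{\varrho}_1 \ge 0$, $\bar{\varrho}_2 > 0$. Let $x_1, x_2 : \mathbb{R} \to \mathbb{R}$ be differentiable and $u : \mathbb{R} \to \mathbb{R}$ be continuous with $x_1'(t) = x_2(t)$ and $x_2'(t) = u(t)$ for all $t \ge t_0$ (the double integrator). Let $h_1 : \mathbb{R}^2 \to \mathbb{R}$ be twice continuously differentiable with $\partial h_1/\partial p_2 \equiv 0$ (relative degree two), set $L_f h_1(p) = \frac{\partial h_1}{\partial p_1}(p)\,p_2$ and $h_2(t,p) = \bar{\varrho}_1\,\Upsilon(t)\,h_1(p) + L_f h_1(p)$. Assume $h_1(x(t_0)) > 0$, $h_2(t_0, x(t_0)) > 0$, and that the closed loop satisfies the safety constraint $\frac{d}{dt}\big[h_2(t, x(t))\big] \ge -\bar{\varrho}_2\,\Upsilon(t)\,h_2(t, x(t))$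 for all $t \ge t_0$. Then $h_1(x(t)) \ge h_1(x(t_0))\,\exp\big(-\bar{\varrho}_1 \int_{t_0}^{t}\Upsilon(s)\,ds\big) > 0$ for all $t \ge t_0$. -/
/-!
Along the trajectory the safety constraint is the linear differential inequality
`h₂' ≥ -ϱ̄₂ Υ h₂`; with the integrating factor `exp (ϱ̄₂ ∫ Υ)` it keeps `h₂` positive.
Since `h₁` does not depend on `x₂`, `(h₁ ∘ x)' = L_f h₁ = h₂ - ϱ̄₁ Υ h₁ > -ϱ̄₁ Υ h₁`, and the
same comparison, now with `exp (ϱ̄₁ ∫ Υ)`, gives the lower bound on `h₁`.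
-/

open Real

theorem mul_exp_neg_integral_le_of_hasDerivAt {a : ℝ} {y y' k : ℝ → ℝ} (hk : Continuous k)
    (hy : ∀ t, a ≤ t → HasDerivAt y (y' t) t) (hy' : ∀ t, a ≤ t → -k t * y t ≤ y' t)
    {t : ℝ} (ht : a ≤ t) :
    y a * exp (-∫ s in a..t, k s) ≤ y t := by
  set E : ℝ → ℝ := fun t => ∫ s in a..t, k s
  have hE : ∀ t, HasDerivAt E (k t) t := fun t =>
    intervalIntegral.integral_hasDerivAt_right (hk.intervalIntegrable a t)
      (hk.stronglyMeasurableAtFilter _ _) hk.continuousAt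
  have hz : ∀ t, a ≤ t →
      HasDerivAt (fun s => y s * exp (E s)) (y' t * exp (E t) + y t * (exp (E t) * k t)) t :=
    fun t ht => (hy t ht).mul (hE t).exp
  have hmono : MonotoneOn (fun s => y s * exp (E s)) (Set.Ici a) := by
    refine monotoneOn_of_hasDerivWithinAt_nonneg (convex_Ici a)
      (fun s hs => (hz s hs).continuousAt.continuousWithinAt)
      (fun s hs => (hz s (interior_subset hs)).hasDerivWithinAt) fun s hs => ?_
    have hs : a ≤ s := interior_subset hs
    have : 0 ≤ (y' s + k s * y s) * exp (E s) :=
      mul_nonneg (by linarith [hy' s hs]) (exp_pos _).le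
    linarith
  have hza : y a ≤ y t * exp (E t) := by
    simpa [E] using hmono Set.self_mem_Ici ht ht
  calc y a * exp (-E t) ≤ y t * exp (E t) * exp (-E t) :=
        mul_le_mul_of_nonneg_right hza (exp_pos _).le
    _ = y t := by rw [mul_assoc, ← exp_add, add_neg_cancel, exp_zero, mul_one]

theorem hasDerivAt_comp_prodMk_of_fderiv_snd_eq_zero {f : ℝ × ℝ → ℝ} {x1 x2 : ℝ → ℝ}
    {v1 v2 t : ℝ} (hf : DifferentiableAt ℝ f (x1 t, x2 t))
    (hsnd : fderiv ℝ f (x1 t, x2 t) (0, 1) = 0)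
    (hx1 : HasDerivAt x1 v1 t) (hx2 : HasDerivAt x2 v2 t) :
    HasDerivAt (fun s => f (x1 s, x2 s)) (fderiv ℝ f (x1 t, x2 t) (1, 0) * v1) t := by
  have hv : ((v1, v2) : ℝ × ℝ) = v1 • ((1 : ℝ), (0 : ℝ)) + v2 • ((0 : ℝ), (1 : ℝ)) := by
    simp
  have h := hf.hasFDerivAt.comp_hasDerivAt t (hx1.prodMk hx2)
  rwa [hv, map_add, map_smul, map_smul, hsnd, smul_zero, add_zero, smul_eq_mul, mul_comm] at h

theorem differentiableAt_fderiv_comp_apply {E F : Type*} [NormedAddCommGroup E]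
    [NormedSpace ℝ E] [NormedAddCommGroup F] [NormedSpace ℝ F] {f : E → F}
    (hf : ContDiff ℝ 2 f) {γ : ℝ → E} {t : ℝ} (hγ : DifferentiableAt ℝ γ t) (v : E) :
    DifferentiableAt ℝ (fun s => fderiv ℝ f (γ s) v) t :=
  ((((hf.fderiv_right (by norm_num)).differentiable one_ne_zero) (γ t)).comp t hγ).clm_apply
    (differentiableAt_const v)

theorem double_integrator_safety_general (t0 : ℝ)
    (Υ : ℝ → ℝ) (hΥ : ContDiff ℝ 1 Υ)
    (ϱ1 ϱ2 : ℝ)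
    (x1 x2 u : ℝ → ℝ)
    (hx1 : ∀ t, t0 ≤ t → HasDerivAt x1 (x2 t) t)
    (hx2 : ∀ t, t0 ≤ t → HasDerivAt x2 (u t) t)
    (h1 : ℝ × ℝ → ℝ) (hh1 : ContDiff ℝ 2 h1)
    (hrel : ∀ p : ℝ × ℝ, fderiv ℝ h1 p (0, 1) = 0)
    (h2 : ℝ → ℝ × ℝ → ℝ)
    (hh2 : ∀ t p, h2 t p = ϱ1 * Υ t * h1 p + fderiv ℝ h1 p (1, 0) * p.2)
    (hinit1 : 0 < h1 (x1 t0, x2 t0))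
    (hinit2 : 0 < h2 t0 (x1 t0, x2 t0))
    (hsafe : ∀ t, t0 ≤ t →
      deriv (fun s => h2 s (x1 s, x2 s)) t ≥ -ϱ2 * Υ t * h2 t (x1 t, x2 t)) :
    ∀ t, t0 ≤ t →
      h1 (x1 t, x2 t) ≥ h1 (x1 t0, x2 t0) * Real.exp (-ϱ1 * ∫ s in t0..t, Υ s) ∧
      0 < h1 (x1 t0, x2 t0) * Real.exp (-ϱ1 * ∫ s in t0..t, Υ s) := by
  set Lfh1 : ℝ → ℝ := fun s => fderiv ℝ h1 (x1 s, x2 s) (1, 0) * x2 s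
  have hG : ∀ t, t0 ≤ t → HasDerivAt (fun s => h1 (x1 s, x2 s)) (Lfh1 t) t := fun t ht =>
    hasDerivAt_comp_prodMk_of_fderiv_snd_eq_zero (hh1.differentiable (by norm_num) _)
      (hrel _) (hx1 t ht) (hx2 t ht)
  have hH : ∀ t, t0 ≤ t → HasDerivAt (fun s => h2 s (x1 s, x2 s))
      (deriv (fun s => h2 s (x1 s, x2 s)) t) t := by
    intro t ht
    simp only [hh2]
    exact ((((hΥ.differentiable one_ne_zero t).const_mul ϱ1).mul (hG t ht).differentiableAt).add
      ((differentiableAt_fderiv_comp_apply hh1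
        ((hx1 t ht).prodMk (hx2 t ht)).differentiableAt _).mul
          (hx2 t ht).differentiableAt)).hasDerivAt
  have hH_pos : ∀ t, t0 ≤ t → 0 < h2 t (x1 t, x2 t) := fun t ht =>
    (mul_pos hinit2 (exp_pos _)).trans_le <|
      mul_exp_neg_integral_le_of_hasDerivAt (hΥ.continuous.const_mul ϱ2) hH
        (fun s hs => by linarith [hsafe s hs]) ht
  intro t ht
  have hbound := mul_exp_neg_integral_le_of_hasDerivAt (hΥ.continuous.const_mul ϱ1) hG
    (fun s hs => by linarith [hH_pos s hs, hh2 s (x1 s, x2 s)]) ht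
  rw [intervalIntegral.integral_const_mul, ← neg_mul] at hbound
  exact ⟨hbound, mul_pos hinit1 (exp_pos _)⟩

/-- Proposition 1 (unperturbed double integrator): for the system `x₁' = x₂`, `x₂' = u`,
a relative-degree-two candidate CBF `h₁` (independent of `x₂`), a positive `C¹`
time-varying gain `Υ`, and the backstepping barrier
`h₂(t, p) = ϱ̄₁ Υ(t) h₁(p) + L_f h₁(p)` with `L_f h₁(p) = ∂₁h₁(p) p₂`, if
`h₁(x(t₀)) > 0`, `h₂(t₀, x(t₀)) > 0` and the closed loop satisfies the QP safety
constraint `(d/dt) h₂(t, x(t)) ≥ -ϱ̄₂ Υ(t) h₂(t, x(t))` for all `t ≥ t₀`, then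
`h₁(x(t)) ≥ h₁(x(t₀)) exp(-ϱ̄₁ ∫_{t₀}^t Υ) > 0` for all `t ≥ t₀`. -/
theorem double_integrator_safety (t0 : ℝ)
    (Υ : ℝ → ℝ) (hΥ : ContDiff ℝ 1 Υ) (hΥpos : ∀ t, t0 ≤ t → 0 < Υ t)
    (ϱ1 ϱ2 : ℝ) (hϱ1 : 0 ≤ ϱ1) (hϱ2 : 0 < ϱ2)
    (x1 x2 u : ℝ → ℝ) (hu : Continuous u)
    (hx1 : ∀ t, t0 ≤ t → HasDerivAt x1 (x2 t) t)
    (hx2 : ∀ t, t0 ≤ t → HasDerivAt x2 (u t) t)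
    (h1 : ℝ × ℝ → ℝ) (hh1 : ContDiff ℝ 2 h1)
    (hrel : ∀ p : ℝ × ℝ, fderiv ℝ h1 p (0, 1) = 0)
    (h2 : ℝ → ℝ × ℝ → ℝ)
    (hh2 : ∀ t p, h2 t p = ϱ1 * Υ t * h1 p + fderiv ℝ h1 p (1, 0) * p.2)
    (hinit1 : 0 < h1 (x1 t0, x2 t0))
    (hinit2 : 0 < h2 t0 (x1 t0, x2 t0))
    (hsafe : ∀ t, t0 ≤ t →
      deriv (fun s => h2 s (x1 s, x2 s)) t ≥ -ϱ2 * Υ t * h2 t (x1 t, x2 t)) :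
    ∀ t, t0 ≤ t →
      h1 (x1 t, x2 t) ≥ h1 (x1 t0, x2 t0) * Real.exp (-ϱ1 * ∫ s in t0..t, Υ s) ∧
      0 < h1 (x1 t0, x2 t0) * Real.exp (-ϱ1 * ∫ s in t0..t, Υ s) :=
  double_integrator_safety_general t0 Υ hΥ ϱ1 ϱ2 x1 x2 u hx1 hx2 h1 hh1 hrel h2 hh2 hinit1 hinit2
    hsafe
end

section
/- Let $t_0 \in \mathbb{R}$, $\theta \ge 0$, $\mu_1, \mu_2 > 0$, let $\Upsilon : \mathbb{R} \to \mathbb{R}$ be continuously differentiable with $\Upsilon(t) > 0$ for all $t \ge t_0$, and let $\varrho_1 \ge 0$, $\varrho_2 > 0$. Let $x_1, x_2, u, d_1, d_2 : \mathbb{R} \to \mathbb{R}$ with $x_1, x_2$ differentiable, $u, d_1, d_2$ continuous, $x_1'(t) = x_2(t) + d_1(t)$, $x_2'(t) = u(t) + d_2(t)$, and $\sqrt{d_1(t)^2 + d_2(t)^2} \le \theta$ for all $t \ge t_0$. Let $h_1 : \mathbb{R}^2 \to \mathbb{R}$ be twice continuously differentiable with $\partial h_1/\partial p_2 \equiv 0$,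 set $L_f h_1(p) = \frac{\partial h_1}{\partial p_1}(p)\,p_2$, $\Lambda_1(p) = \frac{1}{4\mu_1}\|\nabla h_1(p)\|^2 + \mu_1\theta^2$, $h_2(t,p) = \varrho_1\,\Upsilon(t)\,h_1(p) + L_f h_1(p) - \Lambda_1(p)$, and $\Lambda_2(t,p) = \frac{1}{4\mu_2}\|\nabla_p h_2(t,p)\|^2 + \mu_2\theta^2$. Assume $h_1(x(t_0)) > 0$, $h_2(t_0, x(t_0)) > 0$, and that for all $t \ge t_0$ the control satisfies $\partial_t h_2(t, x(t)) + \nabla_p h_2(t, x(t)) \cdot (x_2(t), u(t)) - \Lambda_2(t, x(t)) \ge -\varrho_2\,\Upsilon(t)\,h_2(t, x(t))$. Then $h_1(x(t)) \ge h_1(x(t_0))\,\exp\big(-\varrho_1 \int_{t_0}^{t}\Upsilon(s)\,ds\big) > 0$ for all $t \ge t_0$. -/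
lemma gronwall_lower (t0 : ℝ) (c : ℝ → ℝ) (hc : Continuous c)
    (y y' : ℝ → ℝ) (hy : ∀ t, t0 ≤ t → HasDerivAt y (y' t) t)
    (hge : ∀ t, t0 ≤ t → -c t * y t ≤ y' t) :
    ∀ t, t0 ≤ t → y t0 * Real.exp (-∫ s in t0..t, c s) ≤ y t := by
  intro t ht
  set I : ℝ → ℝ := fun t => ∫ s in t0..t, c s with hIdef
  have hIderiv : ∀ s, HasDerivAt I (c s) s :=
    fun s => (hc.integral_hasStrictDerivAt t0 s).hasDerivAt
  set w : ℝ → ℝ := fun s => y s * Real.exp (I s) with hwdef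
  have hwd : ∀ s, t0 ≤ s →
      HasDerivAt w (y' s * Real.exp (I s) + y s * (Real.exp (I s) * c s)) s :=
    fun s hs => (hy s hs).mul ((hIderiv s).exp)
  have hmono : MonotoneOn w (Set.Ici t0) := by
    apply monotoneOn_of_deriv_nonneg (convex_Ici t0)
    · exact fun s hs => (hwd s hs).continuousAt.continuousWithinAt
    · intro s hs
      rw [interior_Ici] at hs
      exact ((hwd s hs.le).differentiableAt).differentiableWithinAt
    · intro s hs
      rw [interior_Ici] at hs
      rw [(hwd s hs.le).deriv]
      have h1 := hge s hs.le
      have h2 := (Real.exp_pos (I s)).le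
      nlinarith [mul_le_mul_of_nonneg_right h1 h2]
  have h0 : w t0 = y t0 := by
    simp [hwdef, hIdef, intervalIntegral.integral_same]
  have hle : y t0 ≤ y t * Real.exp (I t) := by
    have := hmono Set.self_mem_Ici (Set.mem_Ici.mpr ht) ht
    rwa [h0] at this
  have := mul_le_mul_of_nonneg_right hle (Real.exp_pos (-(I t))).le
  rwa [mul_assoc, ← Real.exp_add, add_neg_cancel, Real.exp_zero, mul_one] at this

lemma young_aux (μ g d : ℝ) (hμ : 0 < μ) :
    -(1 / (4 * μ) * g ^ 2 + μ * d ^ 2) ≤ g * d := by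
  have he : g * d + (1 / (4 * μ) * g ^ 2 + μ * d ^ 2)
      = 1 / (4 * μ) * (g + 2 * μ * d) ^ 2 := by
    field_simp
    ring
  nlinarith [mul_nonneg (by positivity : (0:ℝ) ≤ 1 / (4 * μ)) (sq_nonneg (g + 2 * μ * d))]

/-- Theorem 1 (perturbed double integrator): for `x₁' = x₂ + d₁(t)`, `x₂' = u + d₂(t)`
with `‖(d₁, d₂)(t)‖ ≤ θ`, a relative-degree-two candidate CBF `h₁` (independent of
`x₂`), the smooth robustness margins `Λ₁(p) = (1/(4μ₁))‖∇h₁(p)‖² + μ₁θ²` and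
`Λ₂(t, p) = (1/(4μ₂))‖∇_p h₂(t, p)‖² + μ₂θ²`, and the backstepping barrier
`h₂(t, p) = ϱ₁ Υ(t) h₁(p) + L_f h₁(p) - Λ₁(p)`, if `h₁(x(t₀)) > 0`,
`h₂(t₀, x(t₀)) > 0` and the control satisfies
`∂_t h₂ + ∇_p h₂ ⋅ (x₂, u) - Λ₂ ≥ -ϱ₂ Υ(t) h₂` along the trajectory, then
`h₁(x(t)) ≥ h₁(x(t₀)) exp(-ϱ₁ ∫_{t₀}^t Υ) > 0` for all `t ≥ t₀`. -/
theorem perturbed_double_integrator_safety (t0 θ μ1 μ2 : ℝ)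
    (hθ : 0 ≤ θ) (hμ1 : 0 < μ1) (hμ2 : 0 < μ2)
    (Υ : ℝ → ℝ) (hΥ : ContDiff ℝ 1 Υ) (hΥpos : ∀ t, t0 ≤ t → 0 < Υ t)
    (ϱ1 ϱ2 : ℝ) (hϱ1 : 0 ≤ ϱ1) (hϱ2 : 0 < ϱ2)
    (x1 x2 u d1 d2 : ℝ → ℝ)
    (hu : Continuous u) (hd1c : Continuous d1) (hd2c : Continuous d2)
    (hx1 : ∀ t, t0 ≤ t → HasDerivAt x1 (x2 t + d1 t) t)
    (hx2 : ∀ t, t0 ≤ t → HasDerivAt x2 (u t + d2 t) t)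
    (hdbound : ∀ t, t0 ≤ t → Real.sqrt (d1 t ^ 2 + d2 t ^ 2) ≤ θ)
    (h1 : ℝ × ℝ → ℝ) (hh1 : ContDiff ℝ 2 h1)
    (hrel : ∀ p : ℝ × ℝ, fderiv ℝ h1 p (0, 1) = 0)
    (Λ1 : ℝ × ℝ → ℝ)
    (hΛ1 : ∀ p, Λ1 p = 1 / (4 * μ1) *
      ((fderiv ℝ h1 p (1, 0)) ^ 2 + (fderiv ℝ h1 p (0, 1)) ^ 2) + μ1 * θ ^ 2)
    (h2 : ℝ → ℝ × ℝ → ℝ)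
    (hh2 : ∀ t p, h2 t p = ϱ1 * Υ t * h1 p + fderiv ℝ h1 p (1, 0) * p.2 - Λ1 p)
    (Λ2 : ℝ → ℝ × ℝ → ℝ)
    (hΛ2 : ∀ t p, Λ2 t p = 1 / (4 * μ2) *
      ((fderiv ℝ (h2 t) p (1, 0)) ^ 2 + (fderiv ℝ (h2 t) p (0, 1)) ^ 2) + μ2 * θ ^ 2)
    (hinit1 : 0 < h1 (x1 t0, x2 t0))
    (hinit2 : 0 < h2 t0 (x1 t0, x2 t0))
    (hsafe : ∀ t, t0 ≤ t →
      deriv (fun s => h2 s (x1 t, x2 t)) t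
        + (fderiv ℝ (h2 t) (x1 t, x2 t) (1, 0) * x2 t
            + fderiv ℝ (h2 t) (x1 t, x2 t) (0, 1) * u t)
        - Λ2 t (x1 t, x2 t)
        ≥ -ϱ2 * Υ t * h2 t (x1 t, x2 t)) :
    ∀ t, t0 ≤ t →
      h1 (x1 t, x2 t) ≥ h1 (x1 t0, x2 t0) * Real.exp (-ϱ1 * ∫ s in t0..t, Υ s) ∧
      0 < h1 (x1 t0, x2 t0) * Real.exp (-ϱ1 * ∫ s in t0..t, Υ s) := by
  -- basic facts
  have hh1d : Differentiable ℝ h1 := hh1.differentiable two_ne_zero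
  have hdsq : ∀ t, t0 ≤ t → d1 t ^ 2 + d2 t ^ 2 ≤ θ ^ 2 := by
    intro t ht
    have h0 : (0:ℝ) ≤ d1 t ^ 2 + d2 t ^ 2 := by positivity
    have hb := hdbound t ht
    nlinarith [Real.sq_sqrt h0, Real.sqrt_nonneg (d1 t ^ 2 + d2 t ^ 2)]
  -- first component of the gradient of h1
  set φ : ℝ × ℝ → ℝ := fun p => fderiv ℝ h1 p (1, 0) with hφdef
  have hφc : ContDiff ℝ 1 φ :=
    (hh1.fderiv_right (by norm_num)).clm_apply contDiff_const
  -- the joint function F(t,p) = h2 t p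
  set F : ℝ × (ℝ × ℝ) → ℝ := fun q =>
    ϱ1 * Υ q.1 * h1 q.2 + φ q.2 * q.2.2 - (1 / (4 * μ1) * φ q.2 ^ 2 + μ1 * θ ^ 2)
    with hFdef
  have hΛ1eq : ∀ p, Λ1 p = 1 / (4 * μ1) * φ p ^ 2 + μ1 * θ ^ 2 := by
    intro p; rw [hΛ1 p, hrel p]; ring
  have hh2F : ∀ t p, h2 t p = F (t, p) := by
    intro t p; rw [hh2 t p, hΛ1eq p]
  have hFc : ContDiff ℝ 1 F := by
    apply ContDiff.sub
    · apply ContDiff.add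
      · exact (contDiff_const.mul (hΥ.comp contDiff_fst)).mul
          ((hh1.of_le one_le_two).comp contDiff_snd)
      · exact (hφc.comp contDiff_snd).mul (contDiff_snd.comp contDiff_snd)
    · exact (contDiff_const.mul ((hφc.comp contDiff_snd).pow 2)).add contDiff_const
  have hFd : ∀ q, HasFDerivAt F (fderiv ℝ F q) q :=
    fun q => (hFc.differentiable one_ne_zero q).hasFDerivAt
  -- partial derivative lemmas
  have hpartt : ∀ t p, HasDerivAt (fun s => F (s, p)) (fderiv ℝ F (t, p) (1, (0, 0))) t := by
    intro t p
    exact (hFd (t, p)).comp_hasDerivAt t ((hasDerivAt_id t).prodMk (hasDerivAt_const t p))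
  have hpartp : ∀ t p (v : ℝ × ℝ),
      fderiv ℝ (fun p => F (t, p)) p v = fderiv ℝ F (t, p) (0, v) := by
    intro t p v
    have h : HasFDerivAt (fun p => F (t, p))
        ((fderiv ℝ F (t, p)).comp (ContinuousLinearMap.inr ℝ ℝ (ℝ × ℝ))) p :=
      (hFd (t, p)).comp p (hasFDerivAt_prodMk_right t p)
    rw [h.fderiv]
    simp
  -- linear decompositions
  have hdec : ∀ (L : ℝ × (ℝ × ℝ) →L[ℝ] ℝ) (a b : ℝ),
      L (1, (a, b)) = L (1, (0, 0)) + a * L (0, (1, 0)) + b * L (0, (0, 1)) := by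
    intro L a b
    have hv : ((1:ℝ), ((a, b) : ℝ × ℝ))
        = ((1:ℝ), ((0:ℝ), (0:ℝ))) + a • ((0:ℝ), ((1:ℝ), (0:ℝ))) + b • ((0:ℝ), ((0:ℝ), (1:ℝ))) := by
      simp [Prod.ext_iff]
    rw [hv, map_add, map_add, map_smul, map_smul, smul_eq_mul, smul_eq_mul]
  have hdec2 : ∀ (L : ℝ × ℝ →L[ℝ] ℝ) (a b : ℝ),
      L (a, b) = a * L (1, 0) + b * L (0, 1) := by
    intro L a b
    have hv : ((a, b) : ℝ × ℝ) = a • ((1:ℝ), (0:ℝ)) + b • ((0:ℝ), (1:ℝ)) := by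
      simp [Prod.ext_iff]
    rw [hv, map_add, map_smul, map_smul, smul_eq_mul, smul_eq_mul]
  -- barrier along trajectory
  have hyd : ∀ t, t0 ≤ t → HasDerivAt (fun s => F (s, (x1 s, x2 s)))
      ((fun s => fderiv ℝ F (s, (x1 s, x2 s)) (1, (x2 s + d1 s, u s + d2 s))) t) t := by
    intro t ht
    exact (hFd (t, (x1 t, x2 t))).comp_hasDerivAt t
      ((hasDerivAt_id t).prodMk ((hx1 t ht).prodMk (hx2 t ht)))
  -- ODE inequality for y
  have hyineq : ∀ t, t0 ≤ t →
      -((fun t => ϱ2 * Υ t) t) * ((fun s => F (s, (x1 s, x2 s))) t)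
        ≤ (fun s => fderiv ℝ F (s, (x1 s, x2 s)) (1, (x2 s + d1 s, u s + d2 s))) t := by
    intro t ht
    simp only
    set L := fderiv ℝ F (t, (x1 t, x2 t)) with hLdef
    set g1 : ℝ := L (0, (1, 0)) with hg1
    set g2 : ℝ := L (0, (0, 1)) with hg2
    have hA : deriv (fun s => h2 s (x1 t, x2 t)) t = L (1, (0, 0)) := by
      have he : (fun s => h2 s (x1 t, x2 t)) = fun s => F (s, (x1 t, x2 t)) := by
        funext s; exact hh2F s _
      rw [he]; exact (hpartt t (x1 t, x2 t)).deriv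
    have hh2t : h2 t = fun p => F (t, p) := by funext p; exact hh2F t p
    have hg1' : fderiv ℝ (h2 t) (x1 t, x2 t) (1, 0) = g1 := by
      rw [hh2t, hpartp t (x1 t, x2 t) (1, 0)]
    have hg2' : fderiv ℝ (h2 t) (x1 t, x2 t) (0, 1) = g2 := by
      rw [hh2t, hpartp t (x1 t, x2 t) (0, 1)]
    have hsafet := hsafe t ht
    rw [hA, hg1', hg2', hΛ2 t (x1 t, x2 t), hg1', hg2', hh2F t (x1 t, x2 t)] at hsafet
    rw [hdec L (x2 t + d1 t) (u t + d2 t), ← hg1, ← hg2]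
    have hd := hdsq t ht
    have k1 := young_aux μ2 g1 (d1 t) hμ2
    have k2 := young_aux μ2 g2 (d2 t) hμ2
    have k3 := mul_le_mul_of_nonneg_left hd hμ2.le
    obtain ⟨Y, hY⟩ : ∃ Y, F (t, (x1 t, x2 t)) = Y := ⟨_, rfl⟩
    rw [hY] at hsafet ⊢
    clear_value g1 g2 L
    nlinarith [hsafet]
  -- Grönwall for y : nonnegativity of h2 along trajectory
  have hc2 : Continuous fun t => ϱ2 * Υ t := continuous_const.mul hΥ.continuous
  have hy0 : 0 < F (t0, (x1 t0, x2 t0)) := by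
    rw [← hh2F t0 (x1 t0, x2 t0)]; exact hinit2
  have hynn : ∀ t, t0 ≤ t → 0 ≤ F (t, (x1 t, x2 t)) := by
    intro t ht
    have hg := gronwall_lower t0 (fun t => ϱ2 * Υ t) hc2
      (fun s => F (s, (x1 s, x2 s)))
      (fun s => fderiv ℝ F (s, (x1 s, x2 s)) (1, (x2 s + d1 s, u s + d2 s)))
      hyd hyineq t ht
    have hg' : F (t0, (x1 t0, x2 t0)) * Real.exp (-∫ s in t0..t, ϱ2 * Υ s)
        ≤ F (t, (x1 t, x2 t)) := hg
    have hp : 0 < F (t0, (x1 t0, x2 t0)) * Real.exp (-∫ s in t0..t, ϱ2 * Υ s) :=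
      mul_pos hy0 (Real.exp_pos _)
    linarith
  -- the h1 stage
  have hzd : ∀ t, t0 ≤ t → HasDerivAt (fun s => h1 (x1 s, x2 s))
      ((fun s => fderiv ℝ h1 (x1 s, x2 s) (x2 s + d1 s, u s + d2 s)) t) t := by
    intro t ht
    exact ((hh1d (x1 t, x2 t)).hasFDerivAt).comp_hasDerivAt t
      ((hx1 t ht).prodMk (hx2 t ht))
  have hzineq : ∀ t, t0 ≤ t →
      -((fun t => ϱ1 * Υ t) t) * ((fun s => h1 (x1 s, x2 s)) t)
        ≤ (fun s => fderiv ℝ h1 (x1 s, x2 s) (x2 s + d1 s, u s + d2 s)) t := by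
    intro t ht
    simp only
    rw [hdec2 (fderiv ℝ h1 (x1 t, x2 t)) (x2 t + d1 t) (u t + d2 t), hrel]
    have hd := hdsq t ht
    have k1 := young_aux μ1 (φ (x1 t, x2 t)) (d1 t) hμ1
    have k3 := mul_le_mul_of_nonneg_left hd hμ1.le
    have hFnn := hynn t ht
    have hFt : F (t, (x1 t, x2 t)) = ϱ1 * Υ t * h1 (x1 t, x2 t) + φ (x1 t, x2 t) * x2 t
        - (1 / (4 * μ1) * φ (x1 t, x2 t) ^ 2 + μ1 * θ ^ 2) := rfl
    rw [hFt] at hFnn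
    have hφt : fderiv ℝ h1 (x1 t, x2 t) (1, 0) = φ (x1 t, x2 t) := rfl
    rw [hφt]
    obtain ⟨P, hP⟩ : ∃ P, φ (x1 t, x2 t) = P := ⟨_, rfl⟩
    rw [hP] at k1 hFnn ⊢
    nlinarith [sq_nonneg (d2 t)]
  have hc1 : Continuous fun t => ϱ1 * Υ t := continuous_const.mul hΥ.continuous
  intro t ht
  have hgron := gronwall_lower t0 (fun t => ϱ1 * Υ t) hc1
    (fun s => h1 (x1 s, x2 s))
    (fun s => fderiv ℝ h1 (x1 s, x2 s) (x2 s + d1 s, u s + d2 s))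
    hzd hzineq t ht
  have hgron' : h1 (x1 t0, x2 t0) * Real.exp (-∫ s in t0..t, ϱ1 * Υ s)
      ≤ h1 (x1 t, x2 t) := hgron
  have hintc : (∫ s in t0..t, ϱ1 * Υ s) = ϱ1 * ∫ s in t0..t, Υ s :=
    intervalIntegral.integral_const_mul ϱ1 Υ
  rw [hintc, ← neg_mul] at hgron'
  exact ⟨hgron', mul_pos hinit1 (Real.exp_pos _)⟩
end

section
/- Let $t_0 \in \mathbb{R}$, $n \ge 1$, $\vartheta \ge 1$, let $\Upsilon : \mathbb{R} \to \mathbb{R}$ be continuous with $\Upsilon(t) > 0$ for all $t \ge t_0$, let $\varrho_1, \dots, \varrho_n > 0$, and let $h_1, \dots, h_n : \mathbb{R} \to \mathbb{R}$ be differentiable on $[t_0, \infty)$ with $h_k(t_0) > 0$ for all $k$, satisfying $h_k'(t) = -\varrho_k\,\Upsilon(t)^{\vartheta k}\,h_k(t) + h_{k+1}(t)$ for $1 \le k \le n-1$ and $h_n'(t) \ge -\varrho_n\,\Upsilon(t)^{\vartheta n}\,h_n(t)$, all for $t \ge t_0$. Then for every $k \in \{1, \dots, n\}$ and every $t \ge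 t_0$, $h_k(t) \ge h_k(t_0)\,\exp\big(-\varrho_k \int_{t_0}^{t} \Upsilon(s)^{\vartheta k}\,ds\big) > 0$. -/
/-!
The chain relation `hₖ' = -aₖ hₖ + hₖ₊₁` shows that `hₖ' ≥ -aₖ hₖ` as soon as `hₖ₊₁ ≥ 0`.
A differential inequality `g' ≥ -a g` integrates (the integrating factor `exp (∫ a)` makes
`g · exp (∫ a)` nondecreasing) to `g t ≥ g t₀ · exp (-∫ a)`, which is positive when `g t₀ > 0`.
The QP constraint gives the inequality for `hₙ`, and backward induction from `k = n` to `k = 1`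
propagates it down the chain.
-/

open Real Set

theorem monotoneOn_mul_exp_integral {t0 : ℝ} {a g g' : ℝ → ℝ} (ha : Continuous a)
    (hg : ∀ t, t0 ≤ t → HasDerivAt g (g' t) t) (hg' : ∀ t, t0 ≤ t → -a t * g t ≤ g' t) :
    MonotoneOn (fun t => g t * exp (∫ s in t0..t, a s)) (Ici t0) := by
  have hA : ∀ t, HasDerivAt (fun u => ∫ s in t0..u, a s) (a t) t := fun t =>
    intervalIntegral.integral_hasDerivAt_right (ha.intervalIntegrable _ _)
      (ha.stronglyMeasurableAtFilter _ _) ha.continuousAt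
  have hderiv : ∀ t, t0 ≤ t → HasDerivAt (fun t => g t * exp (∫ s in t0..t, a s))
      ((g' t + a t * g t) * exp (∫ s in t0..t, a s)) t := fun t ht =>
    ((hg t ht).mul (hA t).exp).congr_deriv (by ring)
  refine monotoneOn_of_hasDerivWithinAt_nonneg (convex_Ici t0)
    (fun t ht => (hderiv t ht).continuousAt.continuousWithinAt)
    (fun t ht => (hderiv t (interior_subset ht)).hasDerivWithinAt) fun t ht => ?_
  have : 0 ≤ g' t + a t * g t := by linarith [hg' t (interior_subset ht)]
  positivity

theorem mul_exp_neg_integral_le_of_hasDerivAt_s11 {t0 : ℝ} {a g g' : ℝ → ℝ} (ha : Continuous a)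
    (hg : ∀ t, t0 ≤ t → HasDerivAt g (g' t) t) (hg' : ∀ t, t0 ≤ t → -a t * g t ≤ g' t)
    {t : ℝ} (ht : t0 ≤ t) : g t0 * exp (-∫ s in t0..t, a s) ≤ g t := by
  have hmono := monotoneOn_mul_exp_integral ha hg hg' self_mem_Ici ht ht
  simp only [intervalIntegral.integral_same, exp_zero, mul_one] at hmono
  calc g t0 * exp (-∫ s in t0..t, a s)
      ≤ g t * exp (∫ s in t0..t, a s) * exp (-∫ s in t0..t, a s) := by gcongr
    _ = g t := by rw [mul_assoc, ← exp_add, add_neg_cancel, exp_zero, mul_one]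

theorem chain_of_integrators_safety_general (t0 : ℝ) (n : ℕ)
    (ϑ : ℝ) (hϑ : 1 ≤ ϑ)
    (Υ : ℝ → ℝ) (hΥc : Continuous Υ)
    (ϱ : ℕ → ℝ)
    (h h' : ℕ → ℝ → ℝ)
    (hinit : ∀ k, 1 ≤ k → k ≤ n → 0 < h k t0)
    (hderiv : ∀ k, 1 ≤ k → k ≤ n → ∀ t, t0 ≤ t → HasDerivAt (h k) (h' k t) t)
    (hchain : ∀ k, 1 ≤ k → k ≤ n - 1 → ∀ t, t0 ≤ t →
      h' k t = -ϱ k * Υ t ^ (ϑ * (k : ℝ)) * h k t + h (k + 1) t)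
    (hlast : ∀ t, t0 ≤ t → h' n t ≥ -ϱ n * Υ t ^ (ϑ * (n : ℝ)) * h n t) :
    ∀ k, 1 ≤ k → k ≤ n → ∀ t, t0 ≤ t →
      h k t ≥ h k t0 * Real.exp (-ϱ k * ∫ s in t0..t, Υ s ^ (ϑ * (k : ℝ))) ∧
      0 < h k t0 * Real.exp (-ϱ k * ∫ s in t0..t, Υ s ^ (ϑ * (k : ℝ))) := by
  have ha : ∀ k : ℕ, Continuous fun s => ϱ k * Υ s ^ (ϑ * k) := fun k =>
    continuous_const.mul (hΥc.rpow_const fun _ => Or.inr (mul_nonneg (by linarith) k.cast_nonneg))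
  have hbound : ∀ k ≤ n, 1 ≤ k → ∀ t, t0 ≤ t →
      h k t0 * exp (-∫ s in t0..t, ϱ k * Υ s ^ (ϑ * k)) ≤ h k t := by
    intro k hkn
    induction hkn using Nat.decreasingInduction with
    | self =>
      intro hn t ht
      exact mul_exp_neg_integral_le_of_hasDerivAt_s11 (ha n) (hderiv n hn le_rfl)
        (fun u hu => by linarith [hlast u hu]) ht
    | of_succ k hkn ih =>
      intro hk t ht
      have hnext : ∀ t, t0 ≤ t → 0 ≤ h (k + 1) t := fun t ht =>
        (mul_pos (hinit (k + 1) (by omega) hkn) (exp_pos _)).le.trans (ih (by omega) t ht)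
      refine mul_exp_neg_integral_le_of_hasDerivAt_s11 (ha k) (hderiv k hk hkn.le) (fun u hu => ?_) ht
      rw [hchain k hk (by omega) u hu]
      linarith [hnext u hu]
  intro k hk hkn t ht
  rw [neg_mul, ← intervalIntegral.integral_const_mul]
  exact ⟨hbound k hkn hk t ht, mul_pos (hinit k hk hkn) (exp_pos _)⟩

/-- Proposition 2 (unperturbed `n`-th order chain): if the backstepping barriers satisfy
the exact chain relations `hₖ' = -ϱₖ Υ(t)^{ϑk} hₖ + h_{k+1}` for `1 ≤ k ≤ n-1` and the
QP constraint `hₙ' ≥ -ϱₙ Υ(t)^{ϑn} hₙ`, with `hₖ(t₀) > 0` for all `k`, then for every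
`k ∈ {1, …, n}` and `t ≥ t₀`,
`hₖ(t) ≥ hₖ(t₀) exp(-ϱₖ ∫_{t₀}^t Υ(s)^{ϑk} ds) > 0`. -/
theorem chain_of_integrators_safety (t0 : ℝ) (n : ℕ) (hn : 1 ≤ n)
    (ϑ : ℝ) (hϑ : 1 ≤ ϑ)
    (Υ : ℝ → ℝ) (hΥc : Continuous Υ) (hΥpos : ∀ t, t0 ≤ t → 0 < Υ t)
    (ϱ : ℕ → ℝ) (hϱ : ∀ k, 1 ≤ k → k ≤ n → 0 < ϱ k)
    (h h' : ℕ → ℝ → ℝ)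
    (hinit : ∀ k, 1 ≤ k → k ≤ n → 0 < h k t0)
    (hderiv : ∀ k, 1 ≤ k → k ≤ n → ∀ t, t0 ≤ t → HasDerivAt (h k) (h' k t) t)
    (hchain : ∀ k, 1 ≤ k → k ≤ n - 1 → ∀ t, t0 ≤ t →
      h' k t = -ϱ k * Υ t ^ (ϑ * (k : ℝ)) * h k t + h (k + 1) t)
    (hlast : ∀ t, t0 ≤ t → h' n t ≥ -ϱ n * Υ t ^ (ϑ * (n : ℝ)) * h n t) :
    ∀ k, 1 ≤ k → k ≤ n → ∀ t, t0 ≤ t →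
      h k t ≥ h k t0 * Real.exp (-ϱ k * ∫ s in t0..t, Υ s ^ (ϑ * (k : ℝ))) ∧
      0 < h k t0 * Real.exp (-ϱ k * ∫ s in t0..t, Υ s ^ (ϑ * (k : ℝ))) :=
  chain_of_integrators_safety_general t0 n ϑ hϑ Υ hΥc ϱ h h' hinit hderiv hchain hlast
end

section
/- Let $t_0 \in \mathbb{R}$, $n \ge 1$, $\vartheta \ge 1$, let $\Upsilon : \mathbb{R} \to \mathbb{R}$ be continuous with $\Upsilon(t) > 0$ for all $t \ge t_0$, let $\varrho_1, \dots, \varrho_n > 0$, and let $h_1, \dots, h_n : \mathbb{R} \to \mathbb{R}$ be differentiable on $[t_0, \infty)$ with $h_k(t_0) > 0$ for all $k$, satisfying the differential inequalities $h_k'(t) \ge -\varrho_k\,\Upsilon(t)^{\vartheta k}\,h_k(t) + h_{k+1}(t)$ for $1 \le k \le n-1$ and $h_n'(t) \ge -\varrho_n\,\Upsilon(t)^{\vartheta n}\,h_n(t)$, all for $t \ge t_0$. Then $h_1(t) \ge h_1(t_0)\,\exp\big(-\varrho_1 \int_{t_0}^{t} \Upsilon(s)^{\vartheta}\,ds\big)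 > 0$ for all $t \ge t_0$. -/
/-- Grönwall-type lemma: if `g' ≥ -a g + p` with `p ≥ 0` on `[t0, ∞)` and `a` continuous,
then `g t ≥ g t0 * exp (-∫ a)` for `t ≥ t0`. -/
lemma gronwall_aux (t0 : ℝ) (a g g' p : ℝ → ℝ) (ha : Continuous a)
    (hg : ∀ t, t0 ≤ t → HasDerivAt g (g' t) t)
    (hp : ∀ t, t0 ≤ t → 0 ≤ p t)
    (hineq : ∀ t, t0 ≤ t → g' t ≥ -a t * g t + p t) :
    ∀ t, t0 ≤ t → g t0 * Real.exp (-∫ s in t0..t, a s) ≤ g t := by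
  intro t ht
  set A : ℝ → ℝ := fun u => ∫ s in t0..u, a s with hA
  have hAderiv : ∀ u : ℝ, HasDerivAt A (a u) u := fun u =>
    intervalIntegral.integral_hasDerivAt_right (ha.intervalIntegrable _ _)
      (ha.stronglyMeasurableAtFilter _ _) ha.continuousAt
  set F : ℝ → ℝ := fun u => g u * Real.exp (A u) with hF
  have hFderiv : ∀ u, t0 ≤ u →
      HasDerivAt F (g' u * Real.exp (A u) + g u * (Real.exp (A u) * a u)) u := fun u hu =>
    (hg u hu).mul ((hAderiv u).exp)
  have hmono : MonotoneOn F (Set.Ici t0) := by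
    apply monotoneOn_of_deriv_nonneg (convex_Ici t0)
    · exact fun u hu => ((hFderiv u hu).continuousAt).continuousWithinAt
    · intro u hu
      rw [interior_Ici] at hu
      exact ((hFderiv u (le_of_lt hu)).differentiableAt).differentiableWithinAt
    · intro u hu
      rw [interior_Ici] at hu
      rw [(hFderiv u hu.le).deriv]
      have h1 := hineq u hu.le
      have h2 := hp u hu.le
      have h3 := Real.exp_pos (A u)
      nlinarith [h3.le]
  have hFt0 : F t0 = g t0 := by
    simp [hF, hA, intervalIntegral.integral_same]
  have hle : g t0 ≤ g t * Real.exp (A t) := by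
    rw [← hFt0]; exact hmono (show t0 ∈ Set.Ici t0 from le_refl t0) ht ht
  have hpos := Real.exp_pos (A t)
  rw [Real.exp_neg, mul_inv_le_iff₀' hpos]
  linarith

/-- Theorem 2 (perturbed `n`-th order chain): if the backstepping barriers satisfy the
differential inequalities `hₖ' ≥ -ϱₖ Υ(t)^{ϑk} hₖ + h_{k+1}` for `1 ≤ k ≤ n-1` and
`hₙ' ≥ -ϱₙ Υ(t)^{ϑn} hₙ`, with `hₖ(t₀) > 0` for all `k`, then
`h₁(t) ≥ h₁(t₀) exp(-ϱ₁ ∫_{t₀}^t Υ(s)^{ϑ} ds) > 0` for all `t ≥ t₀`. -/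
theorem perturbed_chain_of_integrators_safety (t0 : ℝ) (n : ℕ) (hn : 1 ≤ n)
    (ϑ : ℝ) (hϑ : 1 ≤ ϑ)
    (Υ : ℝ → ℝ) (hΥc : Continuous Υ) (hΥpos : ∀ t, t0 ≤ t → 0 < Υ t)
    (ϱ : ℕ → ℝ) (hϱ : ∀ k, 1 ≤ k → k ≤ n → 0 < ϱ k)
    (h h' : ℕ → ℝ → ℝ)
    (hinit : ∀ k, 1 ≤ k → k ≤ n → 0 < h k t0)
    (hderiv : ∀ k, 1 ≤ k → k ≤ n → ∀ t, t0 ≤ t → HasDerivAt (h k) (h' k t) t)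
    (hchain : ∀ k, 1 ≤ k → k ≤ n - 1 → ∀ t, t0 ≤ t →
      h' k t ≥ -ϱ k * Υ t ^ (ϑ * (k : ℝ)) * h k t + h (k + 1) t)
    (hlast : ∀ t, t0 ≤ t → h' n t ≥ -ϱ n * Υ t ^ (ϑ * (n : ℝ)) * h n t) :
    ∀ t, t0 ≤ t →
      h 1 t ≥ h 1 t0 * Real.exp (-ϱ 1 * ∫ s in t0..t, Υ s ^ ϑ) ∧
      0 < h 1 t0 * Real.exp (-ϱ 1 * ∫ s in t0..t, Υ s ^ ϑ) := by
  -- the modified coefficient function, continuous on all of ℝ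
  set a : ℕ → ℝ → ℝ := fun k t => ϱ k * max (Υ t) 0 ^ (ϑ * (k : ℝ)) with ha_def
  have ha_cont : ∀ k : ℕ, Continuous (a k) := by
    intro k
    exact continuous_const.mul ((hΥc.max continuous_const).rpow_const
      (fun x => Or.inr (by positivity)))
  have ha_eq : ∀ k : ℕ, ∀ t, t0 ≤ t → a k t = ϱ k * Υ t ^ (ϑ * (k : ℝ)) := by
    intro k t ht
    simp [ha_def, max_eq_left (hΥpos t ht).le]
  -- key Grönwall corollary for each level
  have key : ∀ k : ℕ, 1 ≤ k → k ≤ n → (∀ t, t0 ≤ t → 0 ≤ if k = n then 0 else h (k + 1) t) →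
      (∀ t, t0 ≤ t → h' k t ≥ -ϱ k * Υ t ^ (ϑ * (k : ℝ)) * h k t
        + (if k = n then 0 else h (k + 1) t)) →
      ∀ t, t0 ≤ t → h k t0 * Real.exp (-∫ s in t0..t, a k s) ≤ h k t := by
    intro k hk1 hkn hpnn hkin
    apply gronwall_aux t0 (a k) (h k) (h' k) (fun t => if k = n then 0 else h (k + 1) t)
      (ha_cont k) (hderiv k hk1 hkn) hpnn
    intro t ht
    rw [ha_eq k t ht]
    have := hkin t ht
    linarith [this]
  -- positivity by downward induction
  have hpos : ∀ j : ℕ, ∀ k : ℕ, k + j = n → 1 ≤ k → ∀ t, t0 ≤ t → 0 < h k t := by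
    intro j
    induction j with
    | zero =>
      intro k hkn hk1 t ht
      have hk : k = n := by omega
      subst hk
      have := key k hk1 le_rfl (by intro t ht; simp)
        (by intro t ht; simpa using hlast t ht) t ht
      have h0 := hinit k hk1 le_rfl
      calc (0:ℝ) < h k t0 * Real.exp (-∫ s in t0..t, a k s) :=
            mul_pos h0 (Real.exp_pos _)
        _ ≤ h k t := this
    | succ j ih =>
      intro k hkn hk1 t ht
      have hkn' : k ≠ n := by omega
      have hklt : k ≤ n - 1 := by omega
      have ih' : ∀ t, t0 ≤ t → 0 < h (k + 1) t := ih (k + 1) (by omega) (by omega)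
      have := key k hk1 (by omega)
        (by intro t ht; simp only [if_neg hkn']; exact (ih' t ht).le)
        (by intro t ht; simp only [if_neg hkn']; exact hchain k hk1 hklt t ht) t ht
      have h0 := hinit k hk1 (by omega)
      calc (0:ℝ) < h k t0 * Real.exp (-∫ s in t0..t, a k s) :=
            mul_pos h0 (Real.exp_pos _)
        _ ≤ h k t := this
  -- bound for h 1
  have hbound : ∀ t, t0 ≤ t → h 1 t0 * Real.exp (-∫ s in t0..t, a 1 s) ≤ h 1 t := by
    apply key 1 le_rfl hn
    · intro t ht
      by_cases h1n : 1 = n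
      · simp [h1n]
      · simp only [if_neg h1n]
        exact (hpos (n - 2) 2 (by omega) (by omega) t ht).le
    · intro t ht
      by_cases h1n : 1 = n
      · simp only [if_pos h1n, add_zero]
        have := hlast t ht
        rw [← h1n] at this
        exact this
      · simp only [if_neg h1n]
        exact hchain 1 le_rfl (by omega) t ht
  intro t ht
  have hint : ∫ s in t0..t, a 1 s = ϱ 1 * ∫ s in t0..t, Υ s ^ ϑ := by
    rw [← intervalIntegral.integral_const_mul]
    apply intervalIntegral.integral_congr
    intro s hs
    rw [Set.uIcc_of_le ht] at hs
    have hs0 : t0 ≤ s := hs.1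
    simp [ha_def, max_eq_left (hΥpos s hs0).le, mul_one]
  constructor
  · have := hbound t ht
    rw [hint] at this
    rw [ge_iff_le, neg_mul]
    exact this
  · exact mul_pos (hinit 1 le_rfl hn) (Real.exp_pos _)
end
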